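/- Let L > 0 and (uₜ) be a nonnegative sequence with u_{t+1} ≤ L(uₜ² + u_{t-1}²) for all t ≥ 2, and suppose q := max{2Lu₁, 2Lu₂} < 1. Then for all t ≥ 1, 2L uₜ ≤ q^{2^{⌊(t−1)/2⌋}}. -/
import Mathlib


theorem stmt10 (L : ℝ) (hL : 0 < L) (u : ℕ → ℝ) (hu : ∀ t, 0 ≤ u t)
    (hrec : ∀ t ≥ 2, u (t + 1) ≤ L * ((u t) ^ 2 + (u (t - 1)) ^ 2))
    (hq : max (2 * L * u 1) (2 * L * u 2) < 1) :
    ∀ t ≥ 1, 2 * L * u t ≤ (max (2 * L * u 1) (2 * L * u 2)) ^ (2 ^ ((t - 1) / 2)) := by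
  set q := max (2 * L * u 1) (2 * L * u 2) with hqdef
  have hq0 : 0 ≤ q := le_trans (mul_nonneg (by linarith) (hu 1)) (le_max_left _ _)
  intro t
  induction t using Nat.strong_induction_on with
  | _ t ih =>
    intro ht
    match t with
    | 1 => norm_num; exact le_max_left _ _
    | 2 => norm_num; exact le_max_right _ _
    | (n + 3) =>
      have h1 := ih (n + 2) (by omega) (by omega)
      have h2 := ih (n + 1) (by omega) (by omega)
      simp only [Nat.add_sub_cancel] at h1 h2 ⊢
      have hrec' := hrec (n + 2) (by omega)
      have key : 2 * L * u (n + 3) ≤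
          (2 * L * u (n + 2)) ^ 2 / 2 + (2 * L * u (n + 1)) ^ 2 / 2 := by
        have := mul_le_mul_of_nonneg_left hrec' (by positivity : (0:ℝ) ≤ 2 * L)
        calc 2 * L * u (n + 3) ≤ 2 * L * (L * (u (n + 2) ^ 2 + u (n + 1) ^ 2)) := this
          _ = (2 * L * u (n + 2)) ^ 2 / 2 + (2 * L * u (n + 1)) ^ 2 / 2 := by ring
      have hsq1 : (2 * L * u (n + 2)) ^ 2 ≤ q ^ (2 ^ ((n + 1) / 2) * 2) := by
        rw [pow_mul]
        exact pow_le_pow_left₀ (mul_nonneg (by linarith) (hu _)) h1 2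
      have hsq2 : (2 * L * u (n + 1)) ^ 2 ≤ q ^ (2 ^ (n / 2) * 2) := by
        rw [pow_mul]
        exact pow_le_pow_left₀ (mul_nonneg (by linarith) (hu _)) h2 2
      have he1 : q ^ (2 ^ ((n + 1) / 2) * 2) ≤ q ^ (2 ^ ((n + 2) / 2)) := by
        apply pow_le_pow_of_le_one hq0 hq.le
        have : (n + 2) / 2 ≤ (n + 1) / 2 + 1 := by omega
        calc 2 ^ ((n + 2) / 2) ≤ 2 ^ ((n + 1) / 2 + 1) := Nat.pow_le_pow_right (by norm_num) this
          _ = 2 ^ ((n + 1) / 2) * 2 := by ring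
      have he2 : q ^ (2 ^ (n / 2) * 2) ≤ q ^ (2 ^ ((n + 2) / 2)) := by
        apply pow_le_pow_of_le_one hq0 hq.le
        have : (n + 2) / 2 = n / 2 + 1 := by omega
        rw [this, pow_succ]
      calc 2 * L * u (n + 3) ≤ (2 * L * u (n + 2)) ^ 2 / 2 + (2 * L * u (n + 1)) ^ 2 / 2 := key
        _ ≤ q ^ (2 ^ ((n + 2) / 2)) / 2 + q ^ (2 ^ ((n + 2) / 2)) / 2 := by
            gcongr <;> [exact hsq1.trans he1; exact hsq2.trans he2]
        _ = q ^ (2 ^ ((n + 2) / 2)) := by ring
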